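/- Let n ≥ 2 and let X = μ + R•(A *ᵥ U) be an elliptically distributed random vector with benchmark Y = a ⬝ᵥ X. For events B = {Y ∈ B₁} and B̂ = {Y ∈ B̂₁} (B₁, B̂₁ Borel) with P[B] > 0, P[B̂] > 0, Var_B[Y] > 0 and Var_{B̂}[Y] > 0, define k(·) := (1/(n−1))·(E_·[R²] − E_·[(Y − a⬝ᵥμ)²]/â) and k'(·) := k(·)·â / Var_·[Y]. If k'(B) = k'(B̂), then the conditional covariance matrices are proportional with ratio Var_B[Y]/Var_{B̂}[Y], namely Var_B[X] = (Var_B[Y]/Var_{B̂}[Y]) • Var_{B̂}[X]; consequently the conditional correlation matrices coincide: for all i, j with positive conditional variances, Cov_B[X_i, X_j]/√(Var_B[X_i]·Var_B[X_j]) = Cov_{B̂}[X_i, X_j]/√(Var_{B̂}[X_i]·Var_{B̂}[X_j]). -/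

import Mathlib

open MeasureTheory ProbabilityTheory Matrix

/-- Expectation of a real random variable under the conditional probability `P[|B]`. -/
noncomputable def condE {Ω : Type*} [MeasurableSpace Ω] (P : Measure Ω) (B : Set Ω)
    (f : Ω → ℝ) : ℝ :=
  ∫ ω, f ω ∂(P[|B])

/-- Conditional variance on the event `B`. -/
noncomputable def condVar {Ω : Type*} [MeasurableSpace Ω] (P : Measure Ω) (B : Set Ω)
    (f : Ω → ℝ) : ℝ :=
  condE P B fun ω => (f ω - condE P B f) ^ 2

/-- Conditional covariance on the event `B`. -/
noncomputable def condCov {Ω : Type*} [MeasurableSpace Ω] (P : Measure Ω) (B : Set Ω)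
    (f g : Ω → ℝ) : ℝ :=
  condE P B fun ω => (f ω - condE P B f) * (g ω - condE P B g)

/-!
Write `V = R • U`, `w = Aᵀ a`, so that `X = μ + A V`, `Y = a ⬝ μ + w ⬝ V` and `â = w ⬝ w`.
Since `R` is independent of the rotation invariant `U`, the law of `V` is invariant under every
reflection fixing `w`; as the event `{Y ∈ B₁}` depends on `V` only through `w ⬝ V`, this
invariance survives conditioning. Under an invariant law the mean of `V` is parallel to `w` and
its second moment matrix is `λ w wᵀ + m (1 - w wᵀ / â)`, where the trace `E_B[R²]` determines
`m`. This gives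
`Cov_B[X] = Var_B[Y] / â² · Σa (Σa)ᵀ + k(B) · (Σ - Σa (Σa)ᵀ / â)`,
and `k'(B) = k'(B̂)` says that both coefficients scale by the same factor `Var_B[Y] / Var_B̂[Y]`.
-/

section DotProduct

variable {ι : Type*} [Fintype ι]

lemma dotProduct_self_pos {v : ι → ℝ} (hv : v ≠ 0) : 0 < v ⬝ᵥ v := by
  simpa using dotProduct_self_star_pos_iff.2 hv

lemma sub_smul_dotProduct_eq_zero (d w : ι → ℝ) :
    (d - ((d ⬝ᵥ w) / (w ⬝ᵥ w)) • w) ⬝ᵥ w = 0 := by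
  rcases eq_or_ne w 0 with rfl | hw
  · simp
  rw [sub_dotProduct, smul_dotProduct, smul_eq_mul, div_mul_cancel₀ _ (dotProduct_self_pos hw).ne',
    sub_self]

lemma Matrix.IsSymm.dotProduct_mulVec_comm {M : Matrix ι ι ℝ} (hM : M.IsSymm) (x y : ι → ℝ) :
    x ⬝ᵥ M *ᵥ y = y ⬝ᵥ M *ᵥ x := by
  rw [dotProduct_mulVec, ← mulVec_transpose, hM.eq, dotProduct_comm]

end DotProduct

section Householder

variable {ι : Type*} [Fintype ι] [DecidableEq ι]

/-- Since `2 / 0 = 0`, `householder 0 = 1`; this is why the lemmas below need no `v ≠ 0`. -/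
noncomputable def householder (v : ι → ℝ) : Matrix ι ι ℝ :=
  1 - (2 / (v ⬝ᵥ v)) • vecMulVec v v

lemma householder_mulVec (v x : ι → ℝ) :
    householder v *ᵥ x = x - (2 * (v ⬝ᵥ x) / (v ⬝ᵥ v)) • v := by
  ext i
  simp [householder, sub_mulVec, smul_mulVec, vecMulVec_mulVec]
  ring

lemma householder_transpose (v : ι → ℝ) : (householder v)ᵀ = householder v := by
  simp [householder, transpose_sub, transpose_smul, transpose_vecMulVec]

lemma householder_mul_transpose_self (v : ι → ℝ) : householder v * (householder v)ᵀ = 1 := by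
  rcases eq_or_ne v 0 with rfl | hv
  · simp [householder]
  have hsq : vecMulVec v v * vecMulVec v v = (v ⬝ᵥ v) • vecMulVec v v := by
    simp [vecMulVec_mul_vecMulVec]
  have hvv := (dotProduct_self_pos hv).ne'
  rw [householder_transpose]
  simp only [householder, sub_mul, mul_sub, one_mul, mul_one, Matrix.smul_mul, Matrix.mul_smul,
    hsq, smul_smul]
  field_simp
  module

lemma householder_mulVec_self (v : ι → ℝ) : householder v *ᵥ v = -v := by
  rcases eq_or_ne v 0 with rfl | hv
  · simp
  rw [householder_mulVec, mul_div_assoc, div_self (dotProduct_self_pos hv).ne']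
  module

lemma householder_mulVec_of_dotProduct_eq_zero {v x : ι → ℝ} (h : v ⬝ᵥ x = 0) :
    householder v *ᵥ x = x := by
  simp [householder_mulVec, h]

lemma householder_sub_mulVec {x y : ι → ℝ} (h : x ⬝ᵥ x = y ⬝ᵥ y) :
    householder (x - y) *ᵥ x = y := by
  rcases eq_or_ne x y with rfl | hxy
  · simp [householder]
  have hnorm : (x - y) ⬝ᵥ (x - y) = 2 * ((x - y) ⬝ᵥ x) := by
    simp only [sub_dotProduct, dotProduct_sub, dotProduct_comm y x, h]; ring
  have hcoef : 2 * ((x - y) ⬝ᵥ x) / ((x - y) ⬝ᵥ (x - y)) = 1 := by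
    rw [← hnorm, div_self (dotProduct_self_pos (sub_ne_zero.2 hxy)).ne']
  rw [householder_mulVec, hcoef, one_smul, sub_sub_cancel]

lemma dotProduct_householder_mulVec (v x y : ι → ℝ) :
    x ⬝ᵥ householder v *ᵥ y = householder v *ᵥ x ⬝ᵥ y := by
  rw [dotProduct_mulVec, ← mulVec_transpose, householder_transpose]

lemma householder_mulVec_dotProduct_mulVec (M : Matrix ι ι ℝ) (v x y : ι → ℝ) :
    householder v *ᵥ x ⬝ᵥ M *ᵥ householder v *ᵥ y
      = x ⬝ᵥ (householder v * M * householder v) *ᵥ y := by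
  rw [← mulVec_mulVec, ← mulVec_mulVec, dotProduct_householder_mulVec]

end Householder

section HouseholderInvariant

variable {ι : Type*} [Fintype ι] [DecidableEq ι] {w : ι → ℝ} {M : Matrix ι ι ℝ}

lemma eq_smul_of_householder_mulVec_eq {m : ι → ℝ}
    (hm : ∀ v, v ⬝ᵥ w = 0 → householder v *ᵥ m = m) :
    m = ((m ⬝ᵥ w) / (w ⬝ᵥ w)) • w := by
  have horth : ∀ v, v ⬝ᵥ w = 0 → v ⬝ᵥ m = 0 := fun v hv => by
    have h := dotProduct_householder_mulVec v v m
    rw [hm v hv, householder_mulVec_self, neg_dotProduct] at h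
    linarith
  set u := m - ((m ⬝ᵥ w) / (w ⬝ᵥ w)) • w
  have huw : u ⬝ᵥ w = 0 := sub_smul_dotProduct_eq_zero m w
  have huu : u ⬝ᵥ u = 0 := by
    rw [dotProduct_sub, dotProduct_smul, huw, horth u huw, smul_zero, sub_zero]
  rw [← sub_eq_zero]
  exact dotProduct_self_eq_zero.1 huu

variable (hM : ∀ v, v ⬝ᵥ w = 0 → householder v * M * householder v = M)
include hM

lemma dotProduct_mulVec_eq_zero_of_householder {d : ι → ℝ} (hd : d ⬝ᵥ w = 0) :
    w ⬝ᵥ M *ᵥ d = 0 := by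
  have h := householder_mulVec_dotProduct_mulVec M d w d
  rw [hM d hd, householder_mulVec_self, householder_mulVec_of_dotProduct_eq_zero hd,
    mulVec_neg, dotProduct_neg] at h
  linarith

lemma dotProduct_mulVec_self_eq_of_householder {d d' : ι → ℝ} (hd : d ⬝ᵥ w = 0)
    (hd' : d' ⬝ᵥ w = 0) (h : d ⬝ᵥ d = d' ⬝ᵥ d') : d ⬝ᵥ M *ᵥ d = d' ⬝ᵥ M *ᵥ d' := by
  have hv : (d - d') ⬝ᵥ w = 0 := by rw [sub_dotProduct, hd, hd', sub_self]
  have := householder_mulVec_dotProduct_mulVec M (d - d') d d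
  rwa [hM _ hv, householder_sub_mulVec h, eq_comm] at this

lemma exists_dotProduct_mulVec_self_eq_of_householder :
    ∃ m : ℝ, ∀ d, d ⬝ᵥ w = 0 → d ⬝ᵥ M *ᵥ d = m * (d ⬝ᵥ d) := by
  by_cases hq : ∃ q, q ⬝ᵥ w = 0 ∧ q ≠ 0
  · obtain ⟨q, hqw, hq0⟩ := hq
    have hqq := dotProduct_self_pos hq0
    refine ⟨q ⬝ᵥ M *ᵥ q / (q ⬝ᵥ q), fun d hd => ?_⟩
    rcases eq_or_ne d 0 with rfl | hd0
    · simp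
    have hdd := dotProduct_self_pos hd0
    set x := √(q ⬝ᵥ q / (d ⬝ᵥ d))
    have hx : x ^ 2 = q ⬝ᵥ q / (d ⬝ᵥ d) := Real.sq_sqrt (div_pos hqq hdd).le
    have h := dotProduct_mulVec_self_eq_of_householder hM (d := x • d) (d' := q)
      (by rw [smul_dotProduct, hd, smul_zero]) hqw
      (by rw [smul_dotProduct, dotProduct_smul, smul_smul, smul_eq_mul, ← sq, hx,
        div_mul_cancel₀ _ hdd.ne'])
    rw [mulVec_smul, smul_dotProduct, dotProduct_smul, smul_smul, smul_eq_mul, ← sq, hx] at h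
    rw [← h]
    field_simp
  · push Not at hq
    exact ⟨0, fun d hd => by simp [hq d hd]⟩

variable (hsymm : M.IsSymm)
include hsymm

lemma exists_dotProduct_mulVec_eq_of_householder :
    ∃ m : ℝ, ∀ d d', d ⬝ᵥ w = 0 → d' ⬝ᵥ w = 0 → d ⬝ᵥ M *ᵥ d' = m * (d ⬝ᵥ d') := by
  obtain ⟨m, hm⟩ := exists_dotProduct_mulVec_self_eq_of_householder hM
  refine ⟨m, fun d d' hd hd' => ?_⟩
  have h := hm (d + d') (by rw [add_dotProduct, hd, hd', add_zero])
  simp only [mulVec_add, dotProduct_add, add_dotProduct, hm d hd, hm d' hd',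
    hsymm.dotProduct_mulVec_comm d' d, dotProduct_comm d' d] at h
  linarith

lemma exists_dotProduct_mulVec_eq_add_of_householder :
    ∃ m : ℝ, ∀ d d', d ⬝ᵥ M *ᵥ d' = (d ⬝ᵥ w) * (d' ⬝ᵥ w) / (w ⬝ᵥ w) ^ 2 * (w ⬝ᵥ M *ᵥ w)
      + m * (d ⬝ᵥ d' - (d ⬝ᵥ w) * (d' ⬝ᵥ w) / (w ⬝ᵥ w)) := by
  obtain ⟨m, hm⟩ := exists_dotProduct_mulVec_eq_of_householder hM hsymm
  refine ⟨m, fun d d' => ?_⟩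
  rcases eq_or_ne w 0 with rfl | hw
  · simpa using hm d d' (dotProduct_zero d) (dotProduct_zero d')
  have hww := (dotProduct_self_pos hw).ne'
  set p := (d ⬝ᵥ w) / (w ⬝ᵥ w)
  set p' := (d' ⬝ᵥ w) / (w ⬝ᵥ w)
  have hu := sub_smul_dotProduct_eq_zero d w
  have hu' := sub_smul_dotProduct_eq_zero d' w
  set u := d - p • w
  set u' := d' - p' • w
  calc d ⬝ᵥ M *ᵥ d' = (p • w + u) ⬝ᵥ M *ᵥ (p' • w + u') := by
        rw [add_sub_cancel, add_sub_cancel]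
    _ = p * p' * (w ⬝ᵥ M *ᵥ w) + p * (w ⬝ᵥ M *ᵥ u') + p' * (u ⬝ᵥ M *ᵥ w)
        + u ⬝ᵥ M *ᵥ u' := by
        simp only [mulVec_add, mulVec_smul, dotProduct_add, add_dotProduct, dotProduct_smul,
          smul_dotProduct, smul_eq_mul]
        ring
    _ = p * p' * (w ⬝ᵥ M *ᵥ w) + m * (u ⬝ᵥ u') := by
        rw [dotProduct_mulVec_eq_zero_of_householder hM hu', hsymm.dotProduct_mulVec_comm u w,
          dotProduct_mulVec_eq_zero_of_householder hM hu, hm u u' hu hu']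
        ring
    _ = _ := by
        simp only [u, u', p, p', sub_dotProduct, dotProduct_sub, smul_dotProduct, dotProduct_smul,
          smul_eq_mul, dotProduct_comm w d']
        field_simp
        ring

theorem dotProduct_mulVec_eq_of_householder (hw : w ≠ 0) (hι : 1 < Fintype.card ι)
    (d d' : ι → ℝ) :
    d ⬝ᵥ M *ᵥ d' = (d ⬝ᵥ w) * (d' ⬝ᵥ w) / (w ⬝ᵥ w) ^ 2 * (w ⬝ᵥ M *ᵥ w)
      + (M.trace - (w ⬝ᵥ M *ᵥ w) / (w ⬝ᵥ w)) / (Fintype.card ι - 1)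
        * (d ⬝ᵥ d' - (d ⬝ᵥ w) * (d' ⬝ᵥ w) / (w ⬝ᵥ w)) := by
  obtain ⟨m, hm⟩ := exists_dotProduct_mulVec_eq_add_of_householder hM hsymm
  have hww := (dotProduct_self_pos hw).ne'
  have hn : (Fintype.card ι : ℝ) - 1 ≠ 0 := by
    rw [sub_ne_zero]; exact_mod_cast hι.ne'
  have htrace : M.trace = (w ⬝ᵥ M *ᵥ w) / (w ⬝ᵥ w) + m * (Fintype.card ι - 1) :=
    calc M.trace = ∑ i, (w i * w i / (w ⬝ᵥ w) ^ 2 * (w ⬝ᵥ M *ᵥ w)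
          + m * (1 - w i * w i / (w ⬝ᵥ w))) := by
          refine Finset.sum_congr rfl fun i _ => ?_
          simpa using hm (Pi.single i 1) (Pi.single i 1)
      _ = (w ⬝ᵥ w) / (w ⬝ᵥ w) ^ 2 * (w ⬝ᵥ M *ᵥ w)
          + m * (Fintype.card ι - (w ⬝ᵥ w) / (w ⬝ᵥ w)) := by
          simp only [Finset.sum_add_distrib, ← Finset.sum_mul, ← Finset.mul_sum,
            Finset.sum_sub_distrib, ← Finset.sum_div, Finset.sum_const, Finset.card_univ,
            nsmul_eq_mul, mul_one]
          rfl
      _ = _ := by field_simp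
  rw [hm d d', htrace]
  field_simp
  ring

end HouseholderInvariant

section Moments

variable {Ω ι : Type*} [MeasurableSpace Ω] {Q : Measure Ω} {V : Ω → ι → ℝ}

noncomputable def meanVec (Q : Measure Ω) (V : Ω → ι → ℝ) : ι → ℝ :=
  fun i => ∫ ω, V ω i ∂Q

noncomputable def secondMoment (Q : Measure Ω) (V : Ω → ι → ℝ) : Matrix ι ι ℝ :=
  fun i j => ∫ ω, V ω i * V ω j ∂Q

lemma secondMoment_isSymm : (secondMoment Q V).IsSymm := by
  ext i j
  simp only [transpose_apply, secondMoment, mul_comm]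

variable [Fintype ι]

lemma trace_secondMoment (hV : ∀ i, MemLp (fun ω => V ω i) 2 Q) :
    (secondMoment Q V).trace = ∫ ω, ∑ i, V ω i ^ 2 ∂Q := by
  rw [integral_finsetSum _ fun i _ => (hV i).integrable_sq]
  simp only [trace, diag, secondMoment, sq]

lemma memLp_dotProduct (hV : ∀ i, MemLp (fun ω => V ω i) 2 Q) (c : ι → ℝ) :
    MemLp (fun ω => c ⬝ᵥ V ω) 2 Q :=
  memLp_finsetSum _ fun i _ => (hV i).const_mul (c i)

lemma integral_dotProduct [IsFiniteMeasure Q] (hV : ∀ i, MemLp (fun ω => V ω i) 2 Q)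
    (c : ι → ℝ) : ∫ ω, c ⬝ᵥ V ω ∂Q = c ⬝ᵥ meanVec Q V := by
  simp only [dotProduct]
  rw [integral_finsetSum _ fun i _ => ((hV i).integrable one_le_two).const_mul (c i)]
  simp only [integral_const_mul, meanVec]

lemma integral_dotProduct_mul_dotProduct (hV : ∀ i, MemLp (fun ω => V ω i) 2 Q)
    (c c' : ι → ℝ) :
    ∫ ω, (c ⬝ᵥ V ω) * (c' ⬝ᵥ V ω) ∂Q = c ⬝ᵥ secondMoment Q V *ᵥ c' := by
  have hint : ∀ i j, Integrable (fun ω => c i * c' j * (V ω i * V ω j)) Q := fun i j =>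
    ((hV i).integrable_mul (hV j)).const_mul _
  calc ∫ ω, (c ⬝ᵥ V ω) * (c' ⬝ᵥ V ω) ∂Q
      = ∫ ω, ∑ i, ∑ j, c i * c' j * (V ω i * V ω j) ∂Q := by
        congr 1 with ω
        simp only [dotProduct, Finset.sum_mul_sum]
        exact Finset.sum_congr rfl fun i _ => Finset.sum_congr rfl fun j _ => by ring
    _ = ∑ i, ∑ j, c i * c' j * ∫ ω, V ω i * V ω j ∂Q := by
        rw [integral_finsetSum _ fun i _ => integrable_finsetSum _ fun j _ => hint i j]
        simp only [integral_finsetSum _ fun j _ => hint _ j, integral_const_mul]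
    _ = c ⬝ᵥ secondMoment Q V *ᵥ c' := by
        simp only [dotProduct, mulVec, secondMoment, Finset.mul_sum]
        exact Finset.sum_congr rfl fun i _ => Finset.sum_congr rfl fun j _ => by ring

lemma covariance_dotProduct [IsProbabilityMeasure Q] (hV : ∀ i, MemLp (fun ω => V ω i) 2 Q)
    (c c' : ι → ℝ) :
    cov[fun ω => c ⬝ᵥ V ω, fun ω => c' ⬝ᵥ V ω; Q]
      = c ⬝ᵥ secondMoment Q V *ᵥ c' - (c ⬝ᵥ meanVec Q V) * (c' ⬝ᵥ meanVec Q V) := by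
  rw [covariance_eq_sub (memLp_dotProduct hV c) (memLp_dotProduct hV c'),
    ← integral_dotProduct hV, ← integral_dotProduct hV,
    ← integral_dotProduct_mul_dotProduct hV]
  rfl

lemma integral_comp_mulVec_of_map_eq (hVm : AEMeasurable V Q) {O : Matrix ι ι ℝ}
    (hO : Q.map (fun ω => O *ᵥ V ω) = Q.map V) {g : (ι → ℝ) → ℝ} (hg : Measurable g) :
    ∫ ω, g (O *ᵥ V ω) ∂Q = ∫ ω, g (V ω) ∂Q := by
  have hOV : AEMeasurable (fun ω => O *ᵥ V ω) Q :=
    (Continuous.measurable (f := fun v => O *ᵥ v) (by fun_prop)).comp_aemeasurable hVm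
  rw [← integral_map hOV hg.aestronglyMeasurable, hO, integral_map hVm hg.aestronglyMeasurable]

lemma mulVec_meanVec_of_map_eq [IsFiniteMeasure Q] (hVm : AEMeasurable V Q)
    (hV : ∀ i, MemLp (fun ω => V ω i) 2 Q) {O : Matrix ι ι ℝ}
    (hO : Q.map (fun ω => O *ᵥ V ω) = Q.map V) : O *ᵥ meanVec Q V = meanVec Q V := by
  ext i
  rw [mulVec, ← integral_dotProduct hV]
  exact integral_comp_mulVec_of_map_eq hVm hO (measurable_pi_apply i)

lemma mul_secondMoment_mul_transpose_of_map_eq (hVm : AEMeasurable V Q)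
    (hV : ∀ i, MemLp (fun ω => V ω i) 2 Q) {O : Matrix ι ι ℝ}
    (hO : Q.map (fun ω => O *ᵥ V ω) = Q.map V) : O * secondMoment Q V * Oᵀ = secondMoment Q V := by
  ext i j
  have hentry : (O * secondMoment Q V * Oᵀ) i j = O i ⬝ᵥ secondMoment Q V *ᵥ O j := by
    simp only [mul_apply, transpose_apply, dotProduct, mulVec, Finset.sum_mul, Finset.mul_sum]
    rw [Finset.sum_comm]
    exact Finset.sum_congr rfl fun k _ => Finset.sum_congr rfl fun l _ => by ring
  rw [hentry, ← integral_dotProduct_mul_dotProduct hV]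
  exact integral_comp_mulVec_of_map_eq hVm hO
    ((measurable_pi_apply i).mul (measurable_pi_apply j))

theorem covariance_dotProduct_eq_of_householder [DecidableEq ι] [IsProbabilityMeasure Q]
    (hVm : AEMeasurable V Q) (hV : ∀ i, MemLp (fun ω => V ω i) 2 Q) {w : ι → ℝ} (hw : w ≠ 0)
    (hι : 1 < Fintype.card ι)
    (hinv : ∀ v, v ⬝ᵥ w = 0 → Q.map (fun ω => householder v *ᵥ V ω) = Q.map V)
    (c c' : ι → ℝ) :
    cov[fun ω => c ⬝ᵥ V ω, fun ω => c' ⬝ᵥ V ω; Q]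
      = cov[fun ω => w ⬝ᵥ V ω, fun ω => w ⬝ᵥ V ω; Q] / (w ⬝ᵥ w) ^ 2 * ((c ⬝ᵥ w) * (c' ⬝ᵥ w))
        + (∫ ω, ∑ i, V ω i ^ 2 ∂Q - (∫ ω, (w ⬝ᵥ V ω) ^ 2 ∂Q) / (w ⬝ᵥ w))
          / (Fintype.card ι - 1) * (c ⬝ᵥ c' - (c ⬝ᵥ w) * (c' ⬝ᵥ w) / (w ⬝ᵥ w)) := by
  have hmean := eq_smul_of_householder_mulVec_eq (w := w) fun v hv =>
    mulVec_meanVec_of_map_eq hVm hV (hinv v hv)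
  have hM := dotProduct_mulVec_eq_of_householder (M := secondMoment Q V) (fun v hv => by
      simpa only [householder_transpose] using
        mul_secondMoment_mul_transpose_of_map_eq hVm hV (hinv v hv))
    secondMoment_isSymm hw hι
  have hww := (dotProduct_self_pos hw).ne'
  simp only [sq (w ⬝ᵥ V _)]
  rw [covariance_dotProduct hV, covariance_dotProduct hV, integral_dotProduct_mul_dotProduct hV,
    ← trace_secondMoment hV, hM c c', hmean]
  simp only [dotProduct_smul, smul_eq_mul]
  field_simp
  ring

end Moments

section Conditioning

variable {Ω α : Type*} [MeasurableSpace Ω] [MeasurableSpace α] {P : Measure Ω}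

lemma map_cond_preimage {Z : Ω → α} (hZ : Measurable Z) {S : Set α} (hS : MeasurableSet S) :
    (P[|Z ⁻¹' S]).map Z = (P.map Z)[|S] := by
  rw [ProbabilityTheory.cond, ProbabilityTheory.cond, Measure.map_smul,
    ← Measure.restrict_map hZ hS, Measure.map_apply hZ hS]

lemma map_cond_preimage_comp_eq {Z : Ω → α} {T : α → α} (hZ : Measurable Z) (hT : Measurable T)
    {S : Set α} (hS : MeasurableSet S) (hTS : T ⁻¹' S = S)
    (h : P.map (fun ω => T (Z ω)) = P.map Z) :
    (P[|Z ⁻¹' S]).map (fun ω => T (Z ω)) = (P[|Z ⁻¹' S]).map Z := by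
  have hpre : Z ⁻¹' S = (fun ω => T (Z ω)) ⁻¹' S := by
    change Z ⁻¹' S = Z ⁻¹' (T ⁻¹' S)
    rw [hTS]
  rw [map_cond_preimage hZ hS]
  nth_rewrite 1 [hpre]
  rw [map_cond_preimage (Z := fun ω => T (Z ω)) (hT.comp hZ) hS, h]

lemma MeasureTheory.MemLp.cond {E : Type*} [NormedAddCommGroup E] {f : Ω → E} {p : ENNReal}
    (hf : MemLp f p P) (s : Set Ω) : MemLp f p (P[|s]) := by
  rcases eq_or_ne (P s) 0 with hs | hs
  · simp [cond_eq_zero_of_meas_eq_zero hs]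
  · exact (hf.restrict s).smul_measure (ENNReal.inv_ne_top.2 hs)

lemma condCov_eq_covariance (P : Measure Ω) (B : Set Ω) (f g : Ω → ℝ) :
    condCov P B f g = cov[f, g; P[|B]] := rfl

lemma condVar_eq_condCov (P : Measure Ω) (B : Set Ω) (f : Ω → ℝ) :
    condVar P B f = condCov P B f f := by
  simp only [_root_.condVar, condCov, sq]

lemma condCov_div_sqrt_eq_of_condCov_eq_mul {B B' : Set Ω} {f g : Ω → ℝ} {r : ℝ} (hr : 0 < r)
    (hfg : condCov P B f g = r * condCov P B' f g) (hf : condCov P B f f = r * condCov P B' f f)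
    (hg : condCov P B g g = r * condCov P B' g g) :
    condCov P B f g / √(condVar P B f * condVar P B g)
      = condCov P B' f g / √(condVar P B' f * condVar P B' g) := by
  simp only [condVar_eq_condCov, hfg, hf, hg]
  rw [mul_mul_mul_comm, ← sq, Real.sqrt_mul (sq_nonneg r), Real.sqrt_sq hr.le,
    mul_div_mul_left _ _ hr.ne']

end Conditioning

theorem condCov_add_dotProduct_eq_of_householder {Ω ι : Type*} [MeasurableSpace Ω] [Fintype ι]
    [DecidableEq ι] {P : Measure Ω} [IsProbabilityMeasure P] {V : Ω → ι → ℝ} (hV : Measurable V)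
    (hVL2 : ∀ i, MemLp (fun ω => V ω i) 2 P) {w : ι → ℝ} (hw : w ≠ 0)
    (hι : 1 < Fintype.card ι)
    (hinv : ∀ v, v ⬝ᵥ w = 0 → P.map (fun ω => householder v *ᵥ V ω) = P.map V)
    {t : ℝ} {C : Set ℝ} (hC : MeasurableSet C) {B : Set Ω}
    (hB : B = (fun ω => t + w ⬝ᵥ V ω) ⁻¹' C) (hBpos : P B ≠ 0) (s s' : ℝ) (c c' : ι → ℝ) :
    condCov P B (fun ω => s + c ⬝ᵥ V ω) (fun ω => s' + c' ⬝ᵥ V ω)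
      = condVar P B (fun ω => t + w ⬝ᵥ V ω) / (w ⬝ᵥ w) ^ 2 * ((c ⬝ᵥ w) * (c' ⬝ᵥ w))
        + (condE P B (fun ω => ∑ i, V ω i ^ 2) - condE P B (fun ω => (w ⬝ᵥ V ω) ^ 2) / (w ⬝ᵥ w))
          / (Fintype.card ι - 1) * (c ⬝ᵥ c' - (c ⬝ᵥ w) * (c' ⬝ᵥ w) / (w ⬝ᵥ w)) := by
  have := cond_isProbabilityMeasure hBpos
  have hVB : ∀ i, MemLp (fun ω => V ω i) 2 (P[|B]) := fun i => (hVL2 i).cond B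
  have hS : MeasurableSet {x : ι → ℝ | t + w ⬝ᵥ x ∈ C} :=
    (Continuous.measurable (by fun_prop)) hC
  have hinvB : ∀ v, v ⬝ᵥ w = 0 →
      (P[|B]).map (fun ω => householder v *ᵥ V ω) = (P[|B]).map V := fun v hv => by
    have hHS : (householder v *ᵥ ·) ⁻¹' {x | t + w ⬝ᵥ x ∈ C} = {x | t + w ⬝ᵥ x ∈ C} := by
      ext x
      simp only [Set.mem_preimage, Set.mem_ofPred_eq, dotProduct_householder_mulVec,
        householder_mulVec_of_dotProduct_eq_zero hv]
    rw [hB]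
    exact map_cond_preimage_comp_eq hV (Continuous.measurable (by fun_prop)) hS hHS (hinv v hv)
  rw [condVar_eq_condCov, condCov_eq_covariance, condCov_eq_covariance,
    covariance_const_add_left ((memLp_dotProduct hVB c).integrable one_le_two),
    covariance_const_add_right ((memLp_dotProduct hVB c').integrable one_le_two),
    covariance_const_add_left ((memLp_dotProduct hVB w).integrable one_le_two),
    covariance_const_add_right ((memLp_dotProduct hVB w).integrable one_le_two)]
  exact covariance_dotProduct_eq_of_householder hV.aemeasurable hVB hw hι hinvB c c'

section Elliptical

variable {Ω ι : Type*} [MeasurableSpace Ω] [Fintype ι] {P : Measure Ω} {R : Ω → ℝ}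
  {U : Ω → ι → ℝ}

lemma map_smul_mulVec_eq_of_indepFun [IsFiniteMeasure P] (hR : Measurable R) (hU : Measurable U)
    (hindep : IndepFun R U P) {O : Matrix ι ι ℝ}
    (hO : P.map (fun ω => O *ᵥ U ω) = P.map U) :
    P.map (fun ω => O *ᵥ (R ω • U ω)) = P.map (fun ω => R ω • U ω) := by
  have hOm : Measurable fun u : ι → ℝ => O *ᵥ u := Continuous.measurable (by fun_prop)
  have hOU : Measurable fun ω => O *ᵥ U ω := hOm.comp hU
  have hpair : P.map (fun ω => (R ω, O *ᵥ U ω)) = P.map (fun ω => (R ω, U ω)) := by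
    rw [(indepFun_iff_map_prod_eq_prod_map_map hR.aemeasurable hOU.aemeasurable).1
        (hindep.comp measurable_id hOm),
      (indepFun_iff_map_prod_eq_prod_map_map hR.aemeasurable hU.aemeasurable).1 hindep, hO]
  have hsmul : Measurable fun p : ℝ × (ι → ℝ) => p.1 • p.2 := measurable_fst.smul measurable_snd
  calc P.map (fun ω => O *ᵥ (R ω • U ω))
      = (P.map fun ω => (R ω, O *ᵥ U ω)).map fun p => p.1 • p.2 := by
        rw [Measure.map_map hsmul (hR.prodMk hOU)]
        simp only [Function.comp_def, mulVec_smul]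
    _ = P.map (fun ω => R ω • U ω) := by
        rw [hpair, Measure.map_map hsmul (hR.prodMk hU)]
        rfl

lemma memLp_smul_apply_of_sum_sq_eq_one (hR : MemLp R 2 P) (hU : Measurable U)
    (hUsphere : ∀ᵐ ω ∂P, ∑ i, U ω i ^ 2 = 1) (i : ι) :
    MemLp (fun ω => (R ω • U ω) i) 2 P := by
  have hbound : ∀ᵐ ω ∂P, ‖U ω i‖ ≤ 1 := by
    filter_upwards [hUsphere] with ω hω
    rw [Real.norm_eq_abs, ← sq_le_one_iff_abs_le_one, ← hω]
    exact Finset.single_le_sum (fun j _ => sq_nonneg (U ω j)) (Finset.mem_univ i)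
  exact (memLp_top_of_bound ((measurable_pi_apply i).comp hU).aestronglyMeasurable 1 hbound).mul' hR

end Elliptical

theorem condCov_elliptical {Ω : Type*} [MeasurableSpace Ω] {P : Measure Ω}
    [IsProbabilityMeasure P] {n : ℕ} (hn : 2 ≤ n) {R : Ω → ℝ} {U : Ω → Fin n → ℝ}
    (hR : Measurable R) (hU : Measurable U) (hRL2 : MemLp R 2 P)
    (hUsphere : ∀ᵐ ω ∂P, ∑ i, U ω i ^ 2 = 1)
    (hUrot : ∀ O : Matrix (Fin n) (Fin n) ℝ, O * Oᵀ = 1 →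
      Measure.map (fun ω => O *ᵥ U ω) P = Measure.map U P)
    (hindep : IndepFun R U P) {μv : Fin n → ℝ} {A : Matrix (Fin n) (Fin n) ℝ} {a : Fin n → ℝ}
    (hAa : Aᵀ *ᵥ a ≠ 0) {X : Ω → Fin n → ℝ} (hX : X = fun ω => μv + R ω • (A *ᵥ U ω))
    {Y : Ω → ℝ} (hY : Y = fun ω => a ⬝ᵥ X ω) {C : Set ℝ} (hC : MeasurableSet C)
    (hCpos : P (Y ⁻¹' C) ≠ 0) (i j : Fin n) :
    condCov P (Y ⁻¹' C) (fun ω => X ω i) (fun ω => X ω j)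
      = condVar P (Y ⁻¹' C) Y / (a ⬝ᵥ (A * Aᵀ) *ᵥ a) ^ 2
          * (((A * Aᵀ) *ᵥ a) i * ((A * Aᵀ) *ᵥ a) j)
        + 1 / ((n : ℝ) - 1) * (condE P (Y ⁻¹' C) (fun ω => R ω ^ 2)
            - condE P (Y ⁻¹' C) (fun ω => (Y ω - a ⬝ᵥ μv) ^ 2) / (a ⬝ᵥ (A * Aᵀ) *ᵥ a))
          * ((A * Aᵀ) i j - ((A * Aᵀ) *ᵥ a) i * ((A * Aᵀ) *ᵥ a) j / (a ⬝ᵥ (A * Aᵀ) *ᵥ a)) := by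
  set w := Aᵀ *ᵥ a
  set V : Ω → Fin n → ℝ := fun ω => R ω • U ω
  have hXV : ∀ k, (fun ω => X ω k) = fun ω => μv k + A k ⬝ᵥ V ω := fun k => by
    ext ω; simp [hX, V, mulVec, dotProduct_smul]
  have hYV : Y = fun ω => a ⬝ᵥ μv + w ⬝ᵥ V ω := by
    ext ω; simp [hY, hX, V, w, dotProduct_add, dotProduct_mulVec, mulVec_transpose]
  have hVm : Measurable V := hR.smul hU
  have hinv : ∀ v, v ⬝ᵥ w = 0 → P.map (fun ω => householder v *ᵥ V ω) = P.map V := fun v _ =>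
    map_smul_mulVec_eq_of_indepFun hR hU hindep (hUrot _ (householder_mul_transpose_self v))
  have hcard : 1 < Fintype.card (Fin n) := by rw [Fintype.card_fin]; omega
  have hR2 : condE P (Y ⁻¹' C) (fun ω => R ω ^ 2) = condE P (Y ⁻¹' C) (fun ω => ∑ i, V ω i ^ 2) :=
    integral_congr_ae <| cond_absolutelyContinuous.ae_le <| by
      filter_upwards [hUsphere] with ω hω
      simp only [V, Pi.smul_apply, smul_eq_mul, mul_pow, ← Finset.mul_sum, hω, mul_one]
  have hSigma : ∀ k l, (A * Aᵀ) k l = A k ⬝ᵥ A l := fun k l => by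
    simp [mul_apply, dotProduct]
  have hSigmaA : ∀ k, ((A * Aᵀ) *ᵥ a) k = A k ⬝ᵥ w := fun k => by rw [← mulVec_mulVec]; rfl
  have hahat : a ⬝ᵥ (A * Aᵀ) *ᵥ a = w ⬝ᵥ w := by
    rw [← mulVec_mulVec, dotProduct_mulVec, ← mulVec_transpose]
  rw [hXV i, hXV j, hR2, hSigma, hSigmaA, hSigmaA, hahat]
  subst hYV
  simp only [add_sub_cancel_left]
  rw [condCov_add_dotProduct_eq_of_householder hVm
    (memLp_smul_apply_of_sum_sq_eq_one hRL2 hU hUsphere) hAa hcard hinv hC rfl hCpos,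
    Fintype.card_fin]
  ring

theorem equal_Kprime_invariants_imply_proportional_cov_and_equal_corr_general
    {Ω : Type*} [MeasurableSpace Ω] (P : Measure Ω) [IsProbabilityMeasure P]
    (n : ℕ) (hn : 2 ≤ n)
    (R : Ω → ℝ) (U : Ω → Fin n → ℝ) (hR : Measurable R) (hU : Measurable U)
    (hRL2 : MemLp R 2 P)
    (hUsphere : ∀ᵐ ω ∂P, ∑ i, U ω i ^ 2 = 1)
    (hUrot : ∀ O : Matrix (Fin n) (Fin n) ℝ, O * Oᵀ = 1 →
      Measure.map (fun ω => O *ᵥ U ω) P = Measure.map U P)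
    (hindep : IndepFun R U P)
    (μv : Fin n → ℝ) (A : Matrix (Fin n) (Fin n) ℝ) (hA : IsUnit A.det)
    (a : Fin n → ℝ) (ha : a ≠ 0)
    (X : Ω → Fin n → ℝ) (hX : X = fun ω => μv + R ω • (A *ᵥ U ω))
    (Y : Ω → ℝ) (hY : Y = fun ω => a ⬝ᵥ X ω)
    (ahat : ℝ) (hahat : ahat = a ⬝ᵥ ((A * Aᵀ) *ᵥ a))
    (B₁ Bhat₁ : Set ℝ) (hB₁ : MeasurableSet B₁) (hBhat₁ : MeasurableSet Bhat₁)
    (B Bhat : Set Ω) (hB : B = Y ⁻¹' B₁) (hBhat : Bhat = Y ⁻¹' Bhat₁)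
    (hBpos : 0 < P B) (hBhatpos : 0 < P Bhat)
    (hVarYpos : 0 < condVar P B Y) (hVarYhatpos : 0 < condVar P Bhat Y)
    (kB kBhat : ℝ)
    (hkB : kB = (1 / ((n : ℝ) - 1)) *
      (condE P B (fun ω => R ω ^ 2) - condE P B (fun ω => (Y ω - a ⬝ᵥ μv) ^ 2) / ahat))
    (hkBhat : kBhat = (1 / ((n : ℝ) - 1)) *
      (condE P Bhat (fun ω => R ω ^ 2) - condE P Bhat (fun ω => (Y ω - a ⬝ᵥ μv) ^ 2) / ahat))
    (hKeq : kB * ahat / condVar P B Y = kBhat * ahat / condVar P Bhat Y) :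
    (∀ i j, condCov P B (fun ω => X ω i) (fun ω => X ω j)
      = (condVar P B Y / condVar P Bhat Y)
          * condCov P Bhat (fun ω => X ω i) (fun ω => X ω j)) ∧
    (∀ i j, 0 < condVar P B (fun ω => X ω i) → 0 < condVar P B (fun ω => X ω j) →
      0 < condVar P Bhat (fun ω => X ω i) → 0 < condVar P Bhat (fun ω => X ω j) →
      condCov P B (fun ω => X ω i) (fun ω => X ω j)
          / Real.sqrt (condVar P B (fun ω => X ω i) * condVar P B (fun ω => X ω j))
        = condCov P Bhat (fun ω => X ω i) (fun ω => X ω j)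
          / Real.sqrt (condVar P Bhat (fun ω => X ω i)
              * condVar P Bhat (fun ω => X ω j))) := by
  subst hB hBhat hahat
  have hAa : Aᵀ *ᵥ a ≠ 0 := fun h => ha <| mulVec_injective_of_isUnit
    ((isUnit_transpose A).2 ((isUnit_iff_isUnit_det A).2 hA)) (h.trans (mulVec_zero _).symm)
  have hahat : 0 < a ⬝ᵥ (A * Aᵀ) *ᵥ a := by
    rw [← mulVec_mulVec, dotProduct_mulVec, ← mulVec_transpose]
    exact dotProduct_self_pos hAa
  have hk : kB = condVar P (Y ⁻¹' B₁) Y / condVar P (Y ⁻¹' Bhat₁) Y * kBhat := by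
    field_simp at hKeq ⊢
    linarith
  have hcov : ∀ i j, condCov P (Y ⁻¹' B₁) (fun ω => X ω i) (fun ω => X ω j)
      = condVar P (Y ⁻¹' B₁) Y / condVar P (Y ⁻¹' Bhat₁) Y
        * condCov P (Y ⁻¹' Bhat₁) (fun ω => X ω i) (fun ω => X ω j) := fun i j => by
    rw [condCov_elliptical hn hR hU hRL2 hUsphere hUrot hindep hAa hX hY hB₁ hBpos.ne',
      condCov_elliptical hn hR hU hRL2 hUsphere hUrot hindep hAa hX hY hBhat₁ hBhatpos.ne',
      ← hkB, ← hkBhat, hk]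
    field_simp
  exact ⟨hcov, fun i j _ _ _ _ => condCov_div_sqrt_eq_of_condCov_eq_mul
    (div_pos hVarYpos hVarYhatpos) (hcov i j) (hcov i i) (hcov j j)⟩

theorem equal_Kprime_invariants_imply_proportional_cov_and_equal_corr
    {Ω : Type*} [MeasurableSpace Ω] (P : Measure Ω) [IsProbabilityMeasure P]
    (n : ℕ) (hn : 2 ≤ n)
    (R : Ω → ℝ) (U : Ω → Fin n → ℝ) (hR : Measurable R) (hU : Measurable U)
    (hRpos : ∀ᵐ ω ∂P, 0 < R ω)
    (hR2 : ∫ ω, R ω ^ 2 ∂P = (n : ℝ))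
    (hRL2 : MemLp R 2 P)
    (hUsphere : ∀ᵐ ω ∂P, ∑ i, U ω i ^ 2 = 1)
    (hUrot : ∀ O : Matrix (Fin n) (Fin n) ℝ, O * Oᵀ = 1 →
      Measure.map (fun ω => O *ᵥ U ω) P = Measure.map U P)
    (hindep : IndepFun R U P)
    (μv : Fin n → ℝ) (A : Matrix (Fin n) (Fin n) ℝ) (hA : IsUnit A.det)
    (a : Fin n → ℝ) (ha : a ≠ 0)
    (X : Ω → Fin n → ℝ) (hX : X = fun ω => μv + R ω • (A *ᵥ U ω))
    (Y : Ω → ℝ) (hY : Y = fun ω => a ⬝ᵥ X ω)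
    (hXL2 : ∀ i, MemLp (fun ω => X ω i) 2 P)
    (ahat : ℝ) (hahat : ahat = a ⬝ᵥ ((A * Aᵀ) *ᵥ a))
    (B₁ Bhat₁ : Set ℝ) (hB₁ : MeasurableSet B₁) (hBhat₁ : MeasurableSet Bhat₁)
    (B Bhat : Set Ω) (hB : B = Y ⁻¹' B₁) (hBhat : Bhat = Y ⁻¹' Bhat₁)
    (hBpos : 0 < P B) (hBhatpos : 0 < P Bhat)
    (hVarYpos : 0 < condVar P B Y) (hVarYhatpos : 0 < condVar P Bhat Y)
    (kB kBhat : ℝ)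
    (hkB : kB = (1 / ((n : ℝ) - 1)) *
      (condE P B (fun ω => R ω ^ 2) - condE P B (fun ω => (Y ω - a ⬝ᵥ μv) ^ 2) / ahat))
    (hkBhat : kBhat = (1 / ((n : ℝ) - 1)) *
      (condE P Bhat (fun ω => R ω ^ 2) - condE P Bhat (fun ω => (Y ω - a ⬝ᵥ μv) ^ 2) / ahat))
    (hKeq : kB * ahat / condVar P B Y = kBhat * ahat / condVar P Bhat Y) :
    (∀ i j, condCov P B (fun ω => X ω i) (fun ω => X ω j)
      = (condVar P B Y / condVar P Bhat Y)
          * condCov P Bhat (fun ω => X ω i) (fun ω => X ω j)) ∧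
    (∀ i j, 0 < condVar P B (fun ω => X ω i) → 0 < condVar P B (fun ω => X ω j) →
      0 < condVar P Bhat (fun ω => X ω i) → 0 < condVar P Bhat (fun ω => X ω j) →
      condCov P B (fun ω => X ω i) (fun ω => X ω j)
          / Real.sqrt (condVar P B (fun ω => X ω i) * condVar P B (fun ω => X ω j))
        = condCov P Bhat (fun ω => X ω i) (fun ω => X ω j)
          / Real.sqrt (condVar P Bhat (fun ω => X ω i)
              * condVar P Bhat (fun ω => X ω j))) :=
  equal_Kprime_invariants_imply_proportional_cov_and_equal_corr_general P n hn R U hR hU hRL2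
    hUsphere hUrot hindep μv A hA a ha X hX Y hY ahat hahat B₁ Bhat₁ hB₁ hBhat₁ B Bhat hB hBhat
    hBpos hBhatpos hVarYpos hVarYhatpos kB kBhat hkB hkBhat hKeq
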